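/- In the augmented-model approach to Bayesian optimal design, if h(d, θ, y_d) is a probability density proportional to u(d, θ, y_d)·p_d(y_d | θ)·p(θ) where u is nonnegative and bounded, then the marginal density h(d) = ∫∫ h(d, θ, y_d) dθ dy_d is proportional to the expected utility U(d) = ∫∫ u(d, θ, y_d) p_d(y_d|θ) p(θ) dθ dy_d; consequently d* maximizes U over the bounded design space D if and only if d* is a mode of the marginal density h(d). -/
import Mathlib

open MeasureTheory

/-- in the augmented-model approach to Bayesian optimal design, let
`u : D × Θ × ℝᵐ → [0, C]` be a nonnegative bounded measurable utility, `p` the prior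
density on `Θ` and `pd d · θ` the sampling density of `y_d` given `θ`. Let
`Z = ∫∫∫ u · pd · p > 0` be the normalizing constant, and let
`h(d, θ, y) = u(d,θ,y) pd(d,y,θ) p(θ) / Z` be the augmented joint probability density.
Then the marginal `h(d) = ∫∫ h(d,θ,y) dθ dy` is proportional to the expected utility
`U(d) = ∫∫ u(d,θ,y) pd(d,y,θ) p(θ) dθ dy` (namely `h(d) = U(d)/Z`); consequently a
design `d* ∈ D` maximizes `U` over the bounded design space `D` if and only if `d*` is
a mode of the marginal density `h`. -/
theorem augmented_model_marginal_mode {k m : ℕ} {Θ : Type*} [MeasurableSpace Θ]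
    (ν : Measure Θ) [SigmaFinite ν]
    (D : Set (Fin k → ℝ)) (hD : Bornology.IsBounded D)
    (u : (Fin k → ℝ) → Θ → (Fin m → ℝ) → ℝ)
    (pd : (Fin k → ℝ) → (Fin m → ℝ) → Θ → ℝ) (p : Θ → ℝ)
    (C : ℝ) (hu0 : ∀ d θ y, 0 ≤ u d θ y) (huC : ∀ d θ y, u d θ y ≤ C)
    (hp : ∀ θ, 0 ≤ p θ) (hpd : ∀ d y θ, 0 ≤ pd d y θ)
    (Z : ℝ) (hZ : 0 < Z)
    (hint : ∀ d, Integrable (fun zy : Θ × (Fin m → ℝ) =>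
        u d zy.1 zy.2 * pd d zy.2 zy.1 * p zy.1) (ν.prod volume))
    -- the augmented joint density, normalized by Z
    (h : (Fin k → ℝ) → Θ → (Fin m → ℝ) → ℝ)
    (hdef : ∀ d θ y, h d θ y = u d θ y * pd d y θ * p θ / Z)
    -- expected utility
    (U : (Fin k → ℝ) → ℝ)
    (hU : ∀ d, U d = ∫ zy : Θ × (Fin m → ℝ),
        u d zy.1 zy.2 * pd d zy.2 zy.1 * p zy.1 ∂(ν.prod volume))
    -- marginal of the augmented density
    (hmarg : (Fin k → ℝ) → ℝ)
    (hmargdef : ∀ d, hmarg d = ∫ zy : Θ × (Fin m → ℝ), h d zy.1 zy.2 ∂(ν.prod volume)) :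
    (∀ d, hmarg d = U d / Z) ∧
    ∀ dstar ∈ D, ((∀ d ∈ D, U d ≤ U dstar) ↔ (∀ d ∈ D, hmarg d ≤ hmarg dstar)) := by
  have key : ∀ d, hmarg d = U d / Z := by
    intro d
    rw [hmargdef, hU, ← integral_div]
    congr 1
    funext zy
    rw [hdef]
  refine ⟨key, fun dstar _ => ?_⟩
  constructor
  · intro hmax d hd
    rw [key, key]
    exact div_le_div_of_nonneg_right (hmax d hd) hZ.le
  · intro hmax d hd
    have := hmax d hd
    rw [key, key, div_le_div_iff₀ hZ hZ] at this
    nlinarith
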